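/- arXiv:1208.2895 — 3 statements merged into one kernel-verified Lean document; each statement's English description precedes it below -/
import Mathlib

section
/- Under the linear model Y = Ψ(X) + ε with E[X ⊗ ε] = 0, covariance operator C of X having strictly positive eigenvalues λⱼ with orthonormal eigenbasis (vⱼ) spanning H₁, and Δ = E[X ⊗ Y]: for every x ∈ H₁, Ψ(x) = Σⱼ₌₁^∞ (Δ(vⱼ)/λⱼ) ⟨vⱼ, x⟩, with the series converging in H₂. -/
open MeasureTheory
open scoped InnerProductSpace

/-! Since `ε` is uncorrelated with `X`, the cross-covariance factors as `Δ = Ψ ∘ C`, so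
`Δ vⱼ = λⱼ Ψ vⱼ`. Dividing by `λⱼ > 0` and applying the continuous map `Ψ` to the expansion
`x = Σⱼ ⟪vⱼ, x⟫ vⱼ` gives the series. -/

section

variable {Ω : Type*} [MeasurableSpace Ω] {μ : Measure Ω}

theorem integral_smul_eq_zero_of_forall_integral_mul_inner_eq_zero {E : Type*}
    [NormedAddCommGroup E] [InnerProductSpace ℝ E] [CompleteSpace E] {f : Ω → ℝ} {g : Ω → E}
    (hfg : Integrable (fun ω => f ω • g ω) μ) (h : ∀ y : E, ∫ ω, f ω * ⟪g ω, y⟫_ℝ ∂μ = 0) :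
    ∫ ω, f ω • g ω ∂μ = 0 :=
  integral_eq_zero_of_forall_integral_inner_eq_zero ℝ _ hfg fun y => by
    simpa only [real_inner_smul_right, real_inner_comm] using h y

theorem integral_inner_smul_eq_map_integral_of_linear_model {H H₂ : Type*}
    [NormedAddCommGroup H] [InnerProductSpace ℝ H] [CompleteSpace H]
    [NormedAddCommGroup H₂] [InnerProductSpace ℝ H₂] [CompleteSpace H₂]
    {X : Ω → H} {Y ε : Ω → H₂} {Ψ : H →L[ℝ] H₂} (hmodel : ∀ ω, Y ω = Ψ (X ω) + ε ω)
    (u : H) (horth : ∀ y : H₂, ∫ ω, ⟪X ω, u⟫_ℝ * ⟪ε ω, y⟫_ℝ ∂μ = 0)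
    (hintX : Integrable (fun ω => ⟪X ω, u⟫_ℝ • X ω) μ)
    (hintY : Integrable (fun ω => ⟪X ω, u⟫_ℝ • Y ω) μ) :
    ∫ ω, ⟪X ω, u⟫_ℝ • Y ω ∂μ = Ψ (∫ ω, ⟪X ω, u⟫_ℝ • X ω ∂μ) := by
  have hintΨX : Integrable (fun ω => ⟪X ω, u⟫_ℝ • Ψ (X ω)) μ := by
    simpa only [map_smul] using Ψ.integrable_comp hintX
  have hsplit : (fun ω => ⟪X ω, u⟫_ℝ • Y ω)
      = fun ω => ⟪X ω, u⟫_ℝ • Ψ (X ω) + ⟪X ω, u⟫_ℝ • ε ω := by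
    funext ω; rw [hmodel ω, smul_add]
  have hintε : Integrable (fun ω => ⟪X ω, u⟫_ℝ • ε ω) μ := by
    refine (hintY.sub hintΨX).congr (.of_forall fun ω => ?_)
    simp only [Pi.sub_apply, hmodel ω, smul_add, add_sub_cancel_left]
  rw [hsplit, integral_add hintΨX hintε,
    integral_smul_eq_zero_of_forall_integral_mul_inner_eq_zero hintε horth, add_zero,
    ← Ψ.integral_comp_comm hintX]
  simp only [map_smul]

end

theorem HilbertBasis.hasSum_inner_smul_inv_smul {ι 𝕜 H E : Type*} [RCLike 𝕜]
    [NormedAddCommGroup H] [InnerProductSpace 𝕜 H] [NormedAddCommGroup E] [NormedSpace 𝕜 E]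
    (v : HilbertBasis ι 𝕜 H) (S : H →L[𝕜] E) (T : H → E) (lam : ι → 𝕜)
    (hlam : ∀ i, lam i ≠ 0) (hT : ∀ i, T (v i) = lam i • S (v i)) (x : H) :
    HasSum (fun i => ⟪v i, x⟫_𝕜 • (lam i)⁻¹ • T (v i)) (S x) := by
  have hterm : (fun i => ⟪v i, x⟫_𝕜 • (lam i)⁻¹ • T (v i)) = fun i => S (v.repr x i • v i) := by
    funext i
    rw [hT i, inv_smul_smul₀ (hlam i), map_smul, v.repr_apply_apply]
  simpa only [hterm] using (v.hasSum_repr x).mapL S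

theorem Psi_representation_general {H H₂ Ω : Type*}
    [NormedAddCommGroup H] [InnerProductSpace ℝ H] [CompleteSpace H]
    [NormedAddCommGroup H₂] [InnerProductSpace ℝ H₂] [CompleteSpace H₂]
    [MeasurableSpace Ω] (μ : Measure Ω)
    (X : Ω → H) (Y ε : Ω → H₂) (Ψ : H →L[ℝ] H₂)
    (hmodel : ∀ ω, Y ω = Ψ (X ω) + ε ω)
    (horth : ∀ x : H, ∀ y : H₂, ∫ ω, (⟪X ω, x⟫_ℝ * ⟪ε ω, y⟫_ℝ) ∂μ = 0)
    (hintX : ∀ x : H, Integrable (fun ω => ⟪X ω, x⟫_ℝ • X ω) μ)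
    (hintY : ∀ x : H, Integrable (fun ω => ⟪X ω, x⟫_ℝ • Y ω) μ)
    (C : H →L[ℝ] H) (hC : ∀ x : H, C x = ∫ ω, ⟪X ω, x⟫_ℝ • X ω ∂μ)
    (Δ : H →L[ℝ] H₂) (hΔ : ∀ x : H, Δ x = ∫ ω, ⟪X ω, x⟫_ℝ • Y ω ∂μ)
    (lam : ℕ → ℝ) (v : HilbertBasis ℕ ℝ H) (hpos : ∀ j, 0 < lam j)
    (heig : ∀ j, C (v j) = lam j • v j) (x : H) :
    HasSum (fun j => ⟪(v j : H), x⟫_ℝ • ((lam j)⁻¹ • Δ (v j))) (Ψ x) := by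
  have hΔv : ∀ j, Δ (v j) = lam j • Ψ (v j) := fun j => by
    rw [hΔ, integral_inner_smul_eq_map_integral_of_linear_model hmodel _ (horth _) (hintX _)
      (hintY _), ← hC, heig, map_smul]
  exact v.hasSum_inner_smul_inv_smul Ψ Δ lam (fun j => (hpos j).ne') hΔv x

/-- under the linear model `Y = Ψ(X) + ε` with `X ⊥ ε`, full-rank covariance
operator `C` with eigenpairs `(λⱼ, vⱼ)`, `λⱼ > 0`, `(vⱼ)` an orthonormal basis of `H₁`, and
`Δ = E[X ⊗ Y]`: for every `x`, `Ψ(x) = Σⱼ (Δ(vⱼ)/λⱼ) ⟨vⱼ, x⟩`, the series converging in `H₂`. -/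
theorem Psi_representation {H H₂ Ω : Type*}
    [NormedAddCommGroup H] [InnerProductSpace ℝ H] [CompleteSpace H]
    [NormedAddCommGroup H₂] [InnerProductSpace ℝ H₂] [CompleteSpace H₂]
    [MeasurableSpace Ω] (μ : Measure Ω) [IsProbabilityMeasure μ]
    (X : Ω → H) (Y ε : Ω → H₂) (Ψ : H →L[ℝ] H₂)
    (hX4 : MemLp X 4 μ) (hε2 : MemLp ε 2 μ)
    (hXmean : ∫ ω, X ω ∂μ = 0) (hεmean : ∫ ω, ε ω ∂μ = 0)
    (hmodel : ∀ ω, Y ω = Ψ (X ω) + ε ω)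
    (horth : ∀ x : H, ∀ y : H₂, ∫ ω, (⟪X ω, x⟫_ℝ * ⟪ε ω, y⟫_ℝ) ∂μ = 0)
    (hintX : ∀ x : H, Integrable (fun ω => ⟪X ω, x⟫_ℝ • X ω) μ)
    (hintY : ∀ x : H, Integrable (fun ω => ⟪X ω, x⟫_ℝ • Y ω) μ)
    (C : H →L[ℝ] H) (hC : ∀ x : H, C x = ∫ ω, ⟪X ω, x⟫_ℝ • X ω ∂μ)
    (Δ : H →L[ℝ] H₂) (hΔ : ∀ x : H, Δ x = ∫ ω, ⟪X ω, x⟫_ℝ • Y ω ∂μ)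
    (lam : ℕ → ℝ) (v : HilbertBasis ℕ ℝ H) (hpos : ∀ j, 0 < lam j)
    (heig : ∀ j, C (v j) = lam j • v j) (x : H) :
    HasSum (fun j => ⟪(v j : H), x⟫_ℝ • ((lam j)⁻¹ • Δ (v j))) (Ψ x) :=
  Psi_representation_general μ X Y ε Ψ hmodel horth hintX hintY C hC Δ hΔ lam v hpos heig x
end

section
/- Let C and Ĉ be compact self-adjoint positive operators on a separable Hilbert space H with eigenpairs (λⱼ, vⱼ) and (λ̂ⱼ, v̂ⱼ) respectively, eigenvalues in decreasing order, eigenvectors orthonormal. Fix j ≤ m and let P̂ₘ be the orthogonal projection onto span{v̂₁, ..., v̂ₘ}. If λ̂_{m+1} ≠ λ̂ⱼ, then ‖vⱼ − P̂ₘ(vⱼ)‖² ≤ 4 ‖C − Ĉ‖² / (λ̂_{m+1} − λ̂ⱼ)². -/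
/-!
Write `aₖ = ⟪v̂ₖ, vⱼ⟫`. By Parseval `‖vⱼ - P̂ₘ vⱼ‖² = ∑_{k ≥ m} aₖ²`, and since
`⟪v̂ₖ, (C - Ĉ) vⱼ⟫ = (λⱼ - λ̂ₖ) aₖ`, also `∑ₖ (λⱼ - λ̂ₖ)² aₖ² ≤ ‖C - Ĉ‖²`. A min-max argument (test
`Ĉ` and `C` on a nonzero vector of `span {v̂₀, …, v̂ⱼ}` orthogonal to `v₀, …, vⱼ₋₁`) gives the Weyl
bound `λ̂ⱼ ≤ λⱼ + ‖C - Ĉ‖`, hence `λⱼ - λ̂ₖ ≥ g - ‖C - Ĉ‖` for `k ≥ m`, where `g = λ̂ⱼ - λ̂ₘ`. If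
`g > 2‖C - Ĉ‖` this is at least `g / 2`; otherwise the right-hand side is at least `1 ≥ ∑ aₖ²`.
-/

open scoped InnerProductSpace
open Finset Module Submodule

theorem Submodule.exists_ne_zero_forall_inner_eq_zero {𝕜 E : Type*} [RCLike 𝕜]
    [NormedAddCommGroup E] [InnerProductSpace 𝕜 E] {n : ℕ} (U : Submodule 𝕜 E)
    [FiniteDimensional 𝕜 U] (u : Fin n → E) (hn : n < finrank 𝕜 U) :
    ∃ x ∈ U, x ≠ 0 ∧ ∀ i, ⟪u i, x⟫_𝕜 = 0 := by
  let L : U →ₗ[𝕜] Fin n → 𝕜 := LinearMap.pi fun i => (innerₛₗ 𝕜 (u i)).comp U.subtype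
  obtain ⟨x, hxL, hx0⟩ :=
    exists_mem_ne_zero_of_ne_bot (L.ker_ne_bot_of_finrank_lt (by simpa using hn))
  exact ⟨x, x.2, by simpa using hx0, fun i => congr_fun (LinearMap.mem_ker.1 hxL) i⟩

namespace HilbertBasis

variable {ι H : Type*} [NormedAddCommGroup H] [InnerProductSpace ℝ H]

theorem hasSum_inner_sq (b : HilbertBasis ι ℝ H) (x : H) :
    HasSum (fun i => ⟪b i, x⟫_ℝ ^ 2) (‖x‖ ^ 2) := by
  simpa [real_inner_comm x, sq] using b.hasSum_inner_mul_inner x x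

theorem inner_apply_eq_mul_inner (b : HilbertBasis ι ℝ H) {T : H →L[ℝ] H} {μ : ι → ℝ}
    (hT : ∀ i, T (b i) = μ i • b i) (i : ι) (x : H) :
    ⟪b i, T x⟫_ℝ = μ i * ⟪b i, x⟫_ℝ := by
  have : (innerSL ℝ (b i : H)).comp T = μ i • innerSL ℝ (b i : H) := by
    refine ContinuousLinearMap.ext_on
      (dense_iff_topologicalClosure_eq_top.2 b.dense_span) ?_
    rintro _ ⟨k, rfl⟩
    obtain rfl | hik := eq_or_ne i k
    · simp [hT]
    · simp [hT, b.orthonormal.inner_eq_zero hik]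
  exact DFunLike.congr_fun this x

theorem hasSum_mul_inner_sq (b : HilbertBasis ι ℝ H) {T : H →L[ℝ] H} {μ : ι → ℝ}
    (hT : ∀ i, T (b i) = μ i • b i) (x : H) :
    HasSum (fun i => μ i * ⟪b i, x⟫_ℝ ^ 2) ⟪T x, x⟫_ℝ := by
  simpa [← real_inner_comm (T x), b.inner_apply_eq_mul_inner hT, sq, mul_assoc]
    using b.hasSum_inner_mul_inner (T x) x

variable [LinearOrder ι] {T : H →L[ℝ] H} {μ : ι → ℝ}

theorem apply_inner_self_le (b : HilbertBasis ι ℝ H) (hμ : Antitone μ)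
    (hT : ∀ i, T (b i) = μ i • b i) {j : ι} {x : H} (hx : ∀ i < j, ⟪b i, x⟫_ℝ = 0) :
    ⟪T x, x⟫_ℝ ≤ μ j * ‖x‖ ^ 2 := by
  refine hasSum_le (fun i => ?_) (b.hasSum_mul_inner_sq hT x)
    ((b.hasSum_inner_sq x).mul_left (μ j))
  rcases lt_or_ge i j with hi | hi
  · simp [hx i hi]
  · exact mul_le_mul_of_nonneg_right (hμ hi) (sq_nonneg _)

theorem le_apply_inner_self (b : HilbertBasis ι ℝ H) (hμ : Antitone μ)
    (hT : ∀ i, T (b i) = μ i • b i) {j : ι} {x : H} (hx : ∀ i, j < i → ⟪b i, x⟫_ℝ = 0) :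
    μ j * ‖x‖ ^ 2 ≤ ⟪T x, x⟫_ℝ := by
  refine hasSum_le (fun i => ?_) ((b.hasSum_inner_sq x).mul_left (μ j))
    (b.hasSum_mul_inner_sq hT x)
  rcases le_or_gt i j with hi | hi
  · exact mul_le_mul_of_nonneg_right (hμ hi) (sq_nonneg _)
  · simp [hx i hi]

theorem eigenvalue_le_add_norm_sub (b c : HilbertBasis ℕ ℝ H) {S T : H →L[ℝ] H} {μ ν : ℕ → ℝ}
    (hμ : Antitone μ) (hν : Antitone ν) (hT : ∀ i, T (b i) = μ i • b i)
    (hS : ∀ i, S (c i) = ν i • c i) (j : ℕ) : ν j ≤ μ j + ‖T - S‖ := by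
  let U := span ℝ (Set.range (c ∘ Fin.val : Fin (j + 1) → H))
  have : FiniteDimensional ℝ U := FiniteDimensional.span_of_finite ℝ (Set.finite_range _)
  have hU : finrank ℝ U = j + 1 := by
    simpa using finrank_span_eq_card (c.orthonormal.linearIndependent.comp _ Fin.val_injective)
  obtain ⟨x, hxU, hx0, hxb⟩ :=
    U.exists_ne_zero_forall_inner_eq_zero (fun i : Fin j => (b i : H)) (by omega)
  have hxc : ∀ i, j < i → ⟪c i, x⟫_ℝ = 0 := by
    intro i hi
    obtain ⟨a, rfl⟩ := (mem_span_range_iff_exists_fun ℝ).1 hxU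
    rw [inner_sum]
    refine sum_eq_zero fun k _ => ?_
    simp [inner_smul_right, c.orthonormal.inner_eq_zero (show i ≠ k by omega)]
  have hupper := b.apply_inner_self_le hμ hT (fun i hi => hxb ⟨i, hi⟩)
  have hlower := c.le_apply_inner_self hν hS hxc
  have hpert : ⟪S x, x⟫_ℝ - ⟪T x, x⟫_ℝ ≤ ‖T - S‖ * ‖x‖ ^ 2 := calc
    _ = ⟪(S - T) x, x⟫_ℝ := by simp [inner_sub_left]
    _ ≤ ‖(S - T) x‖ * ‖x‖ := real_inner_le_norm _ _
    _ ≤ ‖S - T‖ * ‖x‖ * ‖x‖ := by gcongr; exact (S - T).le_opNorm x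
    _ = ‖T - S‖ * ‖x‖ ^ 2 := by rw [norm_sub_rev]; ring
  have hx : 0 < ‖x‖ ^ 2 := by positivity
  exact le_of_mul_le_mul_right (by linarith) hx

theorem hasSum_inner_sq_nat_add (b : HilbertBasis ℕ ℝ H) (x : H) (m : ℕ) :
    HasSum (fun i => ⟪b (i + m), x⟫_ℝ ^ 2) (‖x - ∑ k ∈ range m, ⟪b k, x⟫_ℝ • b k‖ ^ 2) := by
  set y := x - ∑ k ∈ range m, ⟪b k, x⟫_ℝ • b k
  have hy : ∀ k, ⟪b k, y⟫_ℝ = if k < m then 0 else ⟪b k, x⟫_ℝ := fun k => by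
    simp [y, inner_sub_right, inner_sum, inner_smul_right, orthonormal_iff_ite.1 b.orthonormal]
    split_ifs <;> simp
  have hhead : ∑ k ∈ range m, ⟪b k, y⟫_ℝ ^ 2 = 0 :=
    sum_eq_zero fun k hk => by simp [hy, mem_range.1 hk]
  have h := (hasSum_nat_add_iff' m).2 (b.hasSum_inner_sq y)
  rw [hhead, sub_zero] at h
  simpa [hy] using h

end HilbertBasis

theorem tsum_sq_nat_add_le_of_gap {a d : ℕ → ℝ} {m : ℕ} {g ε B : ℝ} (hg : 0 < g)
    (ha : HasSum (fun k => a k ^ 2) 1) (hda : HasSum (fun k => (d k * a k) ^ 2) B)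
    (hB : B ≤ ε ^ 2) (hd : ∀ k, m ≤ k → g - ε ≤ d k) :
    ∑' i, a (i + m) ^ 2 ≤ 4 * ε ^ 2 / g ^ 2 := by
  rcases le_or_gt g (2 * ε) with hsmall | hlarge
  · have htail : ∑' i, a (i + m) ^ 2 ≤ 1 :=
      ha.tsum_eq ▸ tsum_comp_le_tsum_of_inj ha.summable (fun _ => sq_nonneg _)
        (add_left_injective m)
    calc _ ≤ 1 := htail
      _ ≤ 4 * ε ^ 2 / g ^ 2 := by rw [le_div_iff₀ (by positivity)]; nlinarith
  · have hda_tail : ∑' i, (d (i + m) * a (i + m)) ^ 2 ≤ B :=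
      hda.tsum_eq ▸ tsum_comp_le_tsum_of_inj hda.summable (fun _ => sq_nonneg _)
        (add_left_injective m)
    have hterm : ∀ i, g ^ 2 * a (i + m) ^ 2 ≤ 4 * (d (i + m) * a (i + m)) ^ 2 := fun i => by
      have : g ≤ 2 * d (i + m) := by linarith [hd (i + m) (Nat.le_add_left m i)]
      rw [mul_pow, ← mul_assoc]
      gcongr
      nlinarith
    rw [le_div_iff₀ (by positivity), mul_comm, ← tsum_mul_left]
    calc ∑' i, g ^ 2 * a (i + m) ^ 2 ≤ ∑' i, 4 * (d (i + m) * a (i + m)) ^ 2 :=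
          Summable.tsum_le_tsum hterm (((summable_nat_add_iff m).2 ha.summable).mul_left _)
            (((summable_nat_add_iff m).2 hda.summable).mul_left _)
      _ ≤ 4 * ε ^ 2 := by rw [tsum_mul_left]; linarith

theorem eigenvector_subspace_perturbation_general {H : Type*}
    [NormedAddCommGroup H] [InnerProductSpace ℝ H]
    (C Chat : H →L[ℝ] H)
    (lam lamhat : ℕ → ℝ) (hlam : Antitone lam) (hlamhat : Antitone lamhat)
    (v vhat : HilbertBasis ℕ ℝ H)
    (hv : ∀ j, C (v j) = lam j • v j) (hvhat : ∀ j, Chat (vhat j) = lamhat j • vhat j)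
    (j m : ℕ) (hjm : j < m) (hne : lamhat m ≠ lamhat j) :
    ‖(v j : H) - ∑ k ∈ Finset.range m, ⟪(vhat k : H), (v j : H)⟫_ℝ • (vhat k : H)‖ ^ 2
      ≤ 4 * ‖C - Chat‖ ^ 2 / (lamhat m - lamhat j) ^ 2 := by
  have hgap : 0 < lamhat j - lamhat m := sub_pos.2 ((hlamhat hjm.le).lt_of_ne hne)
  have hweyl := v.eigenvalue_le_add_norm_sub vhat hlam hlamhat hv hvhat j
  have hvj : ‖(v j : H)‖ = 1 := v.orthonormal.1 j
  have hcoeff : ∀ k, ⟪(vhat k : H), (C - Chat) (v j)⟫_ℝ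
      = (lam j - lamhat k) * ⟪(vhat k : H), (v j : H)⟫_ℝ := fun k => by
    rw [sub_apply, inner_sub_right, hv, inner_smul_right,
      vhat.inner_apply_eq_mul_inner hvhat]
    ring
  rw [← (vhat.hasSum_inner_sq_nat_add (v j) m).tsum_eq, ← neg_sub (lamhat j), neg_sq]
  refine tsum_sq_nat_add_le_of_gap hgap (by simpa [hvj] using vhat.hasSum_inner_sq (v j))
    (by simpa only [hcoeff] using vhat.hasSum_inner_sq ((C - Chat) (v j))) ?_ ?_
  · simpa [hvj] using pow_le_pow_left₀ (norm_nonneg _) ((C - Chat).le_opNorm (v j)) 2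
  · intro k hk
    linarith [hlamhat hk]

/-- eigenvector-subspace perturbation: with `C, Ĉ` compact self-adjoint positive
operators with eigenpairs `(λⱼ, vⱼ)`, `(λ̂ⱼ, v̂ⱼ)` (decreasing eigenvalues, orthonormal bases of
eigenvectors), `P̂ₘ` the orthogonal projection onto `span{v̂₁,...,v̂ₘ}` (so that
`P̂ₘ(vⱼ) = Σₖ₌₁ᵐ ⟨v̂ₖ, vⱼ⟩ v̂ₖ`), for `j ≤ m` (0-indexed: `j < m`) with `λ̂_{m+1} ≠ λ̂ⱼ` we have
`‖vⱼ − P̂ₘ(vⱼ)‖² ≤ 4‖C − Ĉ‖²/(λ̂_{m+1} − λ̂ⱼ)²`. -/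
theorem eigenvector_subspace_perturbation {H : Type*}
    [NormedAddCommGroup H] [InnerProductSpace ℝ H] [CompleteSpace H]
    (C Chat : H →L[ℝ] H)
    (hCc : IsCompactOperator C) (hChatc : IsCompactOperator Chat)
    (hCsa : IsSelfAdjoint C) (hChatsa : IsSelfAdjoint Chat)
    (hCpos : ∀ z : H, 0 ≤ ⟪C z, z⟫_ℝ) (hChatpos : ∀ z : H, 0 ≤ ⟪Chat z, z⟫_ℝ)
    (lam lamhat : ℕ → ℝ) (hlam : Antitone lam) (hlamhat : Antitone lamhat)
    (v vhat : HilbertBasis ℕ ℝ H)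
    (hv : ∀ j, C (v j) = lam j • v j) (hvhat : ∀ j, Chat (vhat j) = lamhat j • vhat j)
    (j m : ℕ) (hjm : j < m) (hne : lamhat m ≠ lamhat j) :
    ‖(v j : H) - ∑ k ∈ Finset.range m, ⟪(vhat k : H), (v j : H)⟫_ℝ • (vhat k : H)‖ ^ 2
      ≤ 4 * ‖C - Chat‖ ^ 2 / (lamhat m - lamhat j) ^ 2 :=
  eigenvector_subspace_perturbation_general C Chat lam lamhat hlam hlamhat v vhat hv hvhat j m hjm
    hne
end

section
/- Let C and Ĉ be compact self-adjoint positive operators on a separable Hilbert space H, with (λⱼ, vⱼ) and (λ̂ⱼ, v̂ⱼ) their eigenpairs in decreasing eigenvalue order, and orthonormal eigenvectors. For j ≥ 1 and the intermediate step of the perturbation argument: (λ̂_{m+1} − λ̂ⱼ)² Σ_{k>m} ⟨vⱼ, v̂ₖ⟩² ≤ 2 ‖(Ĉ − C)(vⱼ)‖² + 2 |λ̂ⱼ − λⱼ|² for all m ≥ j. -/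
/-!
With `x = Ĉ vⱼ - λ̂ⱼ vⱼ`, self-adjointness of `Ĉ` gives `⟪x, v̂ₖ⟫ = (λ̂ₖ - λ̂ⱼ) ⟪vⱼ, v̂ₖ⟫`, and for
`k ≥ m` monotonicity gives `(λ̂ₖ - λ̂ⱼ)² ≥ (λ̂ₘ - λ̂ⱼ)²`. Bessel's inequality then bounds the
weighted tail by `‖x‖²`, and `x = (Ĉ - C) vⱼ + (λⱼ - λ̂ⱼ) vⱼ` with `‖vⱼ‖ = 1`.
-/

open scoped InnerProductSpace

section

variable {H : Type*} [NormedAddCommGroup H] [InnerProductSpace ℝ H] {ι : Type*}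

theorem Orthonormal.summable_subtype_inner_sq {e : ι → H} (he : Orthonormal ℝ e) (s : Set ι)
    (x : H) : Summable fun k : s => ⟪x, e k⟫_ℝ ^ 2 := by
  simpa only [Function.comp_apply, Real.norm_eq_abs, sq_abs, real_inner_comm] using
    (he.comp _ Subtype.val_injective).inner_products_summable x

theorem Orthonormal.tsum_subtype_inner_sq_le {e : ι → H} (he : Orthonormal ℝ e) (s : Set ι)
    (x : H) : ∑' k : s, ⟪x, e k⟫_ℝ ^ 2 ≤ ‖x‖ ^ 2 := by
  simpa only [Function.comp_apply, Real.norm_eq_abs, sq_abs, real_inner_comm] using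
    (he.comp _ Subtype.val_injective).tsum_inner_products_le x

theorem LinearMap.IsSymmetric.inner_sub_smul_eigenvector {T : H →ₗ[ℝ] H} (hT : T.IsSymmetric)
    {w : H} {μ : ℝ} (hw : T w = μ • w) (c : ℝ) (x : H) :
    ⟪T x - c • x, w⟫_ℝ = (μ - c) * ⟪x, w⟫_ℝ := by
  rw [inner_sub_left, real_inner_smul_left, hT, hw, real_inner_smul_right]
  ring

theorem LinearMap.IsSymmetric.sq_mul_tsum_inner_sq_le {T : H →ₗ[ℝ] H} (hT : T.IsSymmetric)
    {e : ι → H} (he : Orthonormal ℝ e) {μ : ι → ℝ} (heig : ∀ k, T (e k) = μ k • e k)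
    (s : Set ι) {c d : ℝ} (hgap : ∀ k ∈ s, d ^ 2 ≤ (μ k - c) ^ 2) (x : H) :
    d ^ 2 * ∑' k : s, ⟪x, e k⟫_ℝ ^ 2 ≤ ‖T x - c • x‖ ^ 2 := by
  have hterm (k : s) : d ^ 2 * ⟪x, e k⟫_ℝ ^ 2 ≤ ⟪T x - c • x, e k⟫_ℝ ^ 2 := by
    rw [hT.inner_sub_smul_eigenvector (heig k), mul_pow]
    exact mul_le_mul_of_nonneg_right (hgap k k.2) (sq_nonneg _)
  calc d ^ 2 * ∑' k : s, ⟪x, e k⟫_ℝ ^ 2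
      = ∑' k : s, d ^ 2 * ⟪x, e k⟫_ℝ ^ 2 := tsum_mul_left.symm
    _ ≤ ∑' k : s, ⟪T x - c • x, e k⟫_ℝ ^ 2 :=
      Summable.tsum_le_tsum hterm ((he.summable_subtype_inner_sq s x).mul_left _)
        (he.summable_subtype_inner_sq s _)
    _ ≤ ‖T x - c • x‖ ^ 2 := he.tsum_subtype_inner_sq_le s _

end

theorem norm_sub_smul_sq_le_of_eigenvector {E : Type*} [NormedAddCommGroup E] [NormedSpace ℝ E]
    {T S : E →L[ℝ] E} {x : E} {μ : ℝ} (hx : S x = μ • x) (hx1 : ‖x‖ = 1) (c : ℝ) :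
    ‖T x - c • x‖ ^ 2 ≤ 2 * ‖(T - S) x‖ ^ 2 + 2 * |c - μ| ^ 2 := by
  have hsplit : T x - c • x = (T - S) x + (μ - c) • x := by
    rw [sub_apply, hx, sub_smul]
    abel
  have hnorm : ‖T x - c • x‖ ≤ ‖(T - S) x‖ + |c - μ| := by
    rw [hsplit, ← abs_sub_comm, ← mul_one |μ - c|, ← hx1, ← Real.norm_eq_abs, ← norm_smul]
    exact norm_add_le _ _
  calc ‖T x - c • x‖ ^ 2 ≤ (‖(T - S) x‖ + |c - μ|) ^ 2 := by gcongr
    _ ≤ 2 * ‖(T - S) x‖ ^ 2 + 2 * |c - μ| ^ 2 := add_sq_le.trans_eq (by ring)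

theorem perturbation_intermediate_general {H : Type*}
    [NormedAddCommGroup H] [InnerProductSpace ℝ H] [CompleteSpace H]
    (C Chat : H →L[ℝ] H)
    (hChatsa : IsSelfAdjoint Chat)
    (lam lamhat : ℕ → ℝ) (hlamhat : Antitone lamhat)
    (v vhat : HilbertBasis ℕ ℝ H)
    (hv : ∀ j, C (v j) = lam j • v j) (hvhat : ∀ j, Chat (vhat j) = lamhat j • vhat j)
    (j m : ℕ) (hjm : j < m) :
    (lamhat m - lamhat j) ^ 2 * (∑' k : {k : ℕ // m ≤ k}, ⟪(v j : H), (vhat (k : ℕ) : H)⟫_ℝ ^ 2)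
      ≤ 2 * ‖(Chat - C) (v j)‖ ^ 2 + 2 * |lamhat j - lam j| ^ 2 := by
  have hgap : ∀ k ∈ {k : ℕ | m ≤ k}, (lamhat m - lamhat j) ^ 2 ≤ (lamhat k - lamhat j) ^ 2 := by
    intro k hk
    have hkm : lamhat k ≤ lamhat m := hlamhat hk
    have hmj : lamhat m ≤ lamhat j := hlamhat hjm.le
    nlinarith
  calc _ ≤ ‖Chat (v j) - lamhat j • v j‖ ^ 2 :=
        hChatsa.isSymmetric.sq_mul_tsum_inner_sq_le vhat.orthonormal hvhat {k | m ≤ k} hgap (v j)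
    _ ≤ _ := norm_sub_smul_sq_le_of_eigenvector (hv j) (v.orthonormal.1 j) _

/-- intermediate perturbation estimate: with `C, Ĉ` compact self-adjoint positive
operators with eigenpairs `(λⱼ, vⱼ)`, `(λ̂ⱼ, v̂ⱼ)` in decreasing eigenvalue order (orthonormal
bases of eigenvectors), for all `m ≥ j` (0-indexed: `j < m+1`, i.e. `j ≤ m`):
`(λ̂_{m+1} − λ̂ⱼ)² Σ_{k>m} ⟨vⱼ, v̂ₖ⟩² ≤ 2‖(Ĉ − C)(vⱼ)‖² + 2|λ̂ⱼ − λⱼ|²`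
(0-indexed: `λ̂_{m+1}` is `lamhat m` and `Σ_{k>m}` runs over indices `k ≥ m`). -/
theorem perturbation_intermediate {H : Type*}
    [NormedAddCommGroup H] [InnerProductSpace ℝ H] [CompleteSpace H]
    (C Chat : H →L[ℝ] H)
    (hCc : IsCompactOperator C) (hChatc : IsCompactOperator Chat)
    (hCsa : IsSelfAdjoint C) (hChatsa : IsSelfAdjoint Chat)
    (hCpos : ∀ z : H, 0 ≤ ⟪C z, z⟫_ℝ) (hChatpos : ∀ z : H, 0 ≤ ⟪Chat z, z⟫_ℝ)
    (lam lamhat : ℕ → ℝ) (hlam : Antitone lam) (hlamhat : Antitone lamhat)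
    (v vhat : HilbertBasis ℕ ℝ H)
    (hv : ∀ j, C (v j) = lam j • v j) (hvhat : ∀ j, Chat (vhat j) = lamhat j • vhat j)
    (j m : ℕ) (hjm : j < m) :
    (lamhat m - lamhat j) ^ 2 * (∑' k : {k : ℕ // m ≤ k}, ⟪(v j : H), (vhat (k : ℕ) : H)⟫_ℝ ^ 2)
      ≤ 2 * ‖(Chat - C) (v j)‖ ^ 2 + 2 * |lamhat j - lam j| ^ 2 :=
  perturbation_intermediate_general C Chat hChatsa lam lamhat hlamhat v vhat hv hvhat j m hjm
end
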